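/- arXiv:2002.09488 — 3 statements merged into one kernel-verified Lean document; each statement's English description precedes it below -/
import Mathlib

section
/- Let 0 < ρ < 1, and define shifted Chebyshev polynomials of the second kind by Q_0(x) = 1, Q_1(x) = (x − (1+ρ))/√ρ, and Q_{k+1}(x) = ((x − (1+ρ))/√ρ)·Q_k(x) − Q_{k−1}(x). Let u_k = ∫ Q_k(x) μ_ρ(x) dx, where μ_ρ is the Marchenko–Pastur density with parameter ρ. Then u_k = (−1)^k ρ^{k/2} for all k ≥ 0. -/
/-!
Substituting `x = 1 + ρ + 2√ρ cos θ`, `θ ∈ [0, π]`, turns `Q_k` into the Chebyshev polynomial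
`S_k (2 cos θ) = sin ((k + 1) θ) / sin θ` and `μ_ρ(x) dx` into
`(2 / π) sin² θ / (1 + ρ + 2√ρ cos θ) dθ`, so `u_k = (2 / π) I (k + 1)` with
`I c = ∫₀^π sin (c θ) sin θ / (1 + ρ + 2√ρ cos θ) dθ`.
From `sin ((c + 1) θ) + sin ((c - 1) θ) = 2 sin (c θ) cos θ` we get
`√ρ I (c + 1) + (1 + ρ) I c + √ρ I (c - 1) = ∫₀^π sin (c θ) sin θ dθ`, which is `π / 2` for
`c = 1` and `0` for integers `c ≥ 2`. The characteristic roots are `-√ρ` and `-1/√ρ`; as `I` is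
bounded only the first one survives, and `I 0 = 0` then forces `I (k + 1) = (π / 2) (-√ρ)^k`.
-/

open Polynomial Real Set

noncomputable def mpDensity (ρ x : ℝ) : ℝ :=
  Real.sqrt (((1 + Real.sqrt ρ) ^ 2 - x) * (x - (1 - Real.sqrt ρ) ^ 2)) /
    (2 * Real.pi * ρ * x)

open Polynomial.Chebyshev in
theorem eq_S_comp_of_recurrence {R : Type*} [CommRing R] (L : R[X]) (Q : ℕ → R[X])
    (hQ0 : Q 0 = 1) (hQ1 : Q 1 = L) (hrec : ∀ k, Q (k + 2) = L * Q (k + 1) - Q k) :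
    ∀ k : ℕ, Q k = (S R k).comp L := by
  intro k
  induction k using Nat.twoStepInduction with
  | zero => simp [hQ0]
  | one => simp [hQ1]
  | more k ih₀ ih₁ =>
    rw [hrec, ih₀, ih₁]
    push_cast
    rw [S_add_two]
    simp only [sub_comp, mul_comp, X_comp]

open Polynomial.Chebyshev in
theorem eval_S_comp_mul_sin {s : ℝ} (hs : s ≠ 0) (c : ℝ) (k : ℕ) (θ : ℝ) :
    ((S ℝ k).comp (C s⁻¹ * (X - C c))).eval (c + 2 * s * cos θ) * sin θ =
      sin ((k + 1) * θ) := by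
  have hL : (C s⁻¹ * (X - C c)).eval (c + 2 * s * cos θ) = 2 * cos θ := by
    simp only [eval_mul, eval_C, eval_sub, eval_X]
    field_simp
    ring
  rw [eval_comp, hL, S_two_mul_real_cos]
  push_cast
  ring

theorem eq_pow_mul_of_bounded_of_recurrence {s : ℝ} (hs : |s| < 1) {u : ℕ → ℝ}
    (hbdd : ∃ C, ∀ n, |u n| ≤ C)
    (hrec : ∀ n, s * u (n + 2) + (1 + s ^ 2) * u (n + 1) + s * u n = 0) :
    ∀ n, u n = (-s) ^ n * u 0 := by
  obtain ⟨C, hC⟩ := hbdd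
  -- `d` solves the first-order recurrence `d n = -s * d (n + 1)`, whose only bounded solution is 0
  set d : ℕ → ℝ := fun n => u (n + 1) + s * u n with hd
  have hd_bdd : ∀ n, |d n| ≤ 2 * C := fun n => calc
    |d n| ≤ |u (n + 1)| + |s| * |u n| := by
      simpa only [hd, abs_mul] using abs_add_le (u (n + 1)) (s * u n)
    _ ≤ C + 1 * C := add_le_add (hC _) (mul_le_mul hs.le (hC _) (abs_nonneg _) zero_le_one)
    _ = 2 * C := by ring
  have hd_shift : ∀ n m, d n = (-s) ^ m * d (n + m) := fun n m => by
    induction m with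
    | zero => simp
    | succ m ih =>
      rw [ih, pow_succ, mul_assoc, ← add_assoc]
      congr 1
      simp only [hd]
      linear_combination hrec (n + m)
  have hd_zero : ∀ n, d n = 0 := fun n => by
    have hlim := (tendsto_pow_atTop_nhds_zero_of_lt_one (abs_nonneg s) hs).const_mul (2 * C)
    rw [mul_zero] at hlim
    refine abs_nonpos_iff.mp (ge_of_tendsto' hlim fun m => ?_)
    rw [hd_shift n m, abs_mul, abs_pow, abs_neg, mul_comm]
    gcongr
    exact hd_bdd _
  intro n
  induction n with
  | zero => simp
  | succ n ih =>
    rw [pow_succ, mul_comm _ (-s), mul_assoc, ← ih]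
    linear_combination hd_zero n

theorem sq_one_sub_abs_le_one_add_sq_add_two_mul_cos (s θ : ℝ) : (1 - |s|) ^ 2 ≤ 1 + s ^ 2 + 2 * s * cos θ := by
  have h : |s * cos θ| ≤ |s| := by
    rw [abs_mul]; exact mul_le_of_le_one_right (abs_nonneg s) (abs_cos_le_one θ)
  nlinarith [neg_abs_le (s * cos θ), sq_abs s]

theorem one_add_sq_add_two_mul_cos_pos {s : ℝ} (hs : |s| ≠ 1) (θ : ℝ) :
    0 < 1 + s ^ 2 + 2 * s * cos θ :=
  (sq_pos_of_ne_zero (sub_ne_zero.mpr hs.symm)).trans_le (sq_one_sub_abs_le_one_add_sq_add_two_mul_cos s θ)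

noncomputable def weightedSinIntegral (s c : ℝ) : ℝ :=
  ∫ θ in (0 : ℝ)..π, sin (c * θ) * sin θ / (1 + s ^ 2 + 2 * s * cos θ)

theorem continuous_sin_mul_sin_div {s : ℝ} (hs : |s| ≠ 1) (c : ℝ) :
    Continuous fun θ => sin (c * θ) * sin θ / (1 + s ^ 2 + 2 * s * cos θ) :=
  Continuous.div (by fun_prop) (by fun_prop) fun θ => (one_add_sq_add_two_mul_cos_pos hs θ).ne'

theorem weightedSinIntegral_recurrence {s : ℝ} (hs : |s| ≠ 1) (c : ℝ) :
    s * weightedSinIntegral s (c + 1) + (1 + s ^ 2) * weightedSinIntegral s c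
      + s * weightedSinIntegral s (c - 1) = ∫ θ in (0 : ℝ)..π, sin (c * θ) * sin θ := by
  have hint : ∀ c', IntervalIntegrable
      (fun θ => sin (c' * θ) * sin θ / (1 + s ^ 2 + 2 * s * cos θ)) MeasureTheory.volume 0 π :=
    fun c' => (continuous_sin_mul_sin_div hs c').intervalIntegrable 0 π
  simp only [weightedSinIntegral, ← intervalIntegral.integral_const_mul]
  rw [← intervalIntegral.integral_add ((hint _).const_mul _) ((hint _).const_mul _),
    ← intervalIntegral.integral_add (((hint _).const_mul _).add ((hint _).const_mul _))
      ((hint _).const_mul _)]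
  refine intervalIntegral.integral_congr fun θ _ => ?_
  have hg := (one_add_sq_add_two_mul_cos_pos hs θ).ne'
  have hsum : sin ((c + 1) * θ) + sin ((c - 1) * θ) = 2 * sin (c * θ) * cos θ := by
    rw [add_mul, sub_mul, one_mul, sin_add, sin_sub]; ring
  rw [mul_div_assoc', mul_div_assoc', mul_div_assoc', ← add_div, ← add_div,
    div_eq_iff hg]
  linear_combination s * sin θ * hsum

theorem abs_weightedSinIntegral_le {s : ℝ} (hs : |s| ≠ 1) (c : ℝ) :
    |weightedSinIntegral s c| ≤ π / (1 - |s|) ^ 2 := by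
  have hpos : 0 < (1 - |s|) ^ 2 := sq_pos_of_ne_zero (sub_ne_zero.mpr hs.symm)
  have := intervalIntegral.norm_integral_le_of_norm_le_const (a := 0) (b := π)
    (C := 1 / (1 - |s|) ^ 2)
    (f := fun θ => sin (c * θ) * sin θ / (1 + s ^ 2 + 2 * s * cos θ)) fun θ _ => by
      have hg := one_add_sq_add_two_mul_cos_pos hs θ
      rw [norm_div, norm_of_nonneg hg.le, norm_mul]
      exact div_le_div₀ zero_le_one
        (mul_le_one₀ (abs_sin_le_one _) (abs_nonneg _) (abs_sin_le_one _)) hpos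
        (sq_one_sub_abs_le_one_add_sq_add_two_mul_cos s θ)
  rw [sub_zero, abs_of_pos pi_pos] at this
  simpa [weightedSinIntegral, div_eq_inv_mul] using this

theorem integral_cos_nat_mul (n : ℕ) (hn : n ≠ 0) : ∫ θ in (0 : ℝ)..π, cos (n * θ) = 0 := by
  rw [intervalIntegral.integral_comp_mul_left cos (Nat.cast_ne_zero.mpr hn), integral_cos]
  simp [sin_nat_mul_pi]

theorem integral_sin_nat_add_two_mul_mul_sin (n : ℕ) :
    ∫ θ in (0 : ℝ)..π, sin ((n + 2) * θ) * sin θ = 0 := by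
  have h : ∀ θ, sin ((n + 2) * θ) * sin θ =
      (cos (((n + 1 : ℕ) : ℝ) * θ) - cos (((n + 3 : ℕ) : ℝ) * θ)) / 2 := fun θ => by
    rw [show ((n + 1 : ℕ) : ℝ) * θ = (n + 2) * θ - θ by push_cast; ring,
      show ((n + 3 : ℕ) : ℝ) * θ = (n + 2) * θ + θ by push_cast; ring, ← two_mul_sin_mul_sin]
    ring
  have hint : ∀ k : ℕ, IntervalIntegrable (fun θ => cos (k * θ)) MeasureTheory.volume 0 π :=
    fun k => (by fun_prop : Continuous fun θ : ℝ => cos (k * θ)).intervalIntegrable _ _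
  simp_rw [h]
  rw [intervalIntegral.integral_div, intervalIntegral.integral_sub (hint _) (hint _),
    integral_cos_nat_mul _ n.succ_ne_zero, integral_cos_nat_mul _ (by omega), sub_zero, zero_div]

theorem weightedSinIntegral_nat_add_one {s : ℝ} (hs : |s| < 1) (n : ℕ) :
    weightedSinIntegral s (n + 1) = π / 2 * (-s) ^ n := by
  have hgeom : ∀ n : ℕ, weightedSinIntegral s (n + 1) = (-s) ^ n * weightedSinIntegral s 1 := by
    simpa using eq_pow_mul_of_bounded_of_recurrence hs
      (u := fun n : ℕ => weightedSinIntegral s (n + 1))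
      ⟨_, fun n => abs_weightedSinIntegral_le hs.ne _⟩ fun n => by
        have h := weightedSinIntegral_recurrence hs.ne (n + 2)
        rw [integral_sin_nat_add_two_mul_mul_sin] at h
        push_cast
        convert h using 3 <;> ring_nf
  have hW1 : weightedSinIntegral s 1 = π / 2 := by
    have h := weightedSinIntegral_recurrence hs.ne 1
    have h2 := hgeom 1
    have hW0 : weightedSinIntegral s 0 = 0 := by simp [weightedSinIntegral]
    have hsin : ∫ θ in (0 : ℝ)..π, sin (1 * θ) * sin θ = π / 2 := by
      simp [← sq, integral_sin_sq]
    rw [Nat.cast_one] at h2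
    rw [h2, sub_self, hW0, hsin] at h
    linear_combination h
  rw [hgeom, hW1, mul_comm]

theorem continuousOn_mpDensity {ρ : ℝ} (hρ : ρ ≠ 0) : ContinuousOn (mpDensity ρ) (Ioi 0) :=
  ContinuousOn.div (by fun_prop) (by fun_prop) fun x hx => by
    simp [hρ, pi_ne_zero, (mem_Ioi.mp hx).ne']

theorem mpDensity_sq_one_add_sq_add_two_mul_cos {s θ : ℝ} (hs : 0 < s) (hθ : 0 ≤ sin θ) :
    mpDensity (s ^ 2) (1 + s ^ 2 + 2 * s * cos θ) =
      sin θ / (π * s * (1 + s ^ 2 + 2 * s * cos θ)) := by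
  have hsq : ((1 + s) ^ 2 - (1 + s ^ 2 + 2 * s * cos θ)) *
      (1 + s ^ 2 + 2 * s * cos θ - (1 - s) ^ 2) = (2 * s * sin θ) ^ 2 := by
    linear_combination (-4 * s ^ 2) * sin_sq_add_cos_sq θ
  rw [mpDensity, sqrt_sq hs.le, hsq, sqrt_sq (by positivity)]
  field_simp

theorem integral_mul_mpDensity_sq {s : ℝ} (hs0 : 0 < s) (hs1 : s ≠ 1) {f : ℝ → ℝ}
    (hf : ContinuousOn f (Icc ((1 - s) ^ 2) ((1 + s) ^ 2))) :
    ∫ x in (1 - s) ^ 2..(1 + s) ^ 2, f x * mpDensity (s ^ 2) x =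
      2 / π * ∫ θ in (0 : ℝ)..π,
        f (1 + s ^ 2 + 2 * s * cos θ) * sin θ ^ 2 / (1 + s ^ 2 + 2 * s * cos θ) := by
  set g : ℝ → ℝ := fun θ => 1 + s ^ 2 + 2 * s * cos θ with hg
  have hpos : 0 < (1 - s) ^ 2 := sq_pos_of_ne_zero (sub_ne_zero.mpr hs1.symm)
  have hg_mem : ∀ θ, g θ ∈ Icc ((1 - s) ^ 2) ((1 + s) ^ 2) := fun θ =>
    ⟨by nlinarith [neg_one_le_cos θ], by nlinarith [cos_le_one θ]⟩
  have hderiv : ∀ θ ∈ uIcc 0 π, HasDerivAt g (-(2 * s * sin θ)) θ := fun θ _ => by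
    rw [hg]
    simpa using ((hasDerivAt_cos θ).const_mul (2 * s)).const_add (1 + s ^ 2)
  have hcont : ContinuousOn (fun x => f x * mpDensity (s ^ 2) x) (g '' uIcc 0 π) := by
    refine (hf.mul ((continuousOn_mpDensity (by positivity)).mono fun x hx => ?_)).mono ?_
    · exact hpos.trans_le hx.1
    · rintro _ ⟨θ, -, rfl⟩
      exact hg_mem θ
  have hsubst := intervalIntegral.integral_comp_mul_deriv' hderiv (by fun_prop) hcont
  have hg0 : g 0 = (1 + s) ^ 2 := by simp only [hg, cos_zero]; ring
  have hgπ : g π = (1 - s) ^ 2 := by simp only [hg, cos_pi]; ring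
  rw [hg0, hgπ] at hsubst
  rw [intervalIntegral.integral_symm, ← hsubst, ← intervalIntegral.integral_neg,
    ← intervalIntegral.integral_const_mul]
  refine intervalIntegral.integral_congr fun θ hθ => ?_
  rw [uIcc_of_le pi_pos.le] at hθ
  have hgθ := hpos.trans_le (hg_mem θ).1
  simp only [Function.comp_apply, hg] at hgθ ⊢
  rw [mpDensity_sq_one_add_sq_add_two_mul_cos hs0 (sin_nonneg_of_nonneg_of_le_pi hθ.1 hθ.2)]
  field_simp

/-- for the shifted Chebyshev polynomials of the second kind
Q_0 = 1, Q_1 = (X − (1+ρ))/√ρ, Q_{k+1} = ((X − (1+ρ))/√ρ)·Q_k − Q_{k−1},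
the moments u_k = ∫ Q_k(x) μ_ρ(x) dx against the Marchenko–Pastur density satisfy
u_k = (−1)^k ρ^{k/2}. -/
theorem stmt_3 (ρ : ℝ) (hρ0 : 0 < ρ) (hρ1 : ρ < 1)
    (Q : ℕ → Polynomial ℝ)
    (hQ0 : Q 0 = 1)
    (hQ1 : Q 1 = Polynomial.C (Real.sqrt ρ)⁻¹ * (Polynomial.X - Polynomial.C (1 + ρ)))
    (hrec : ∀ k, Q (k + 2) =
      Polynomial.C (Real.sqrt ρ)⁻¹ * (Polynomial.X - Polynomial.C (1 + ρ)) * Q (k + 1)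
        - Q k) :
    ∀ k, (∫ x in ((1 - Real.sqrt ρ) ^ 2)..((1 + Real.sqrt ρ) ^ 2),
        (Q k).eval x * mpDensity ρ x) = (-1) ^ k * (Real.sqrt ρ) ^ k := by
  obtain ⟨s, hs0, rfl⟩ : ∃ s, 0 < s ∧ ρ = s ^ 2 := ⟨√ρ, sqrt_pos.2 hρ0, (sq_sqrt hρ0.le).symm⟩
  have hs1 : s < 1 := by nlinarith
  rw [sqrt_sq hs0.le] at hQ1 hrec ⊢
  intro k
  have hQ := eq_S_comp_of_recurrence _ Q hQ0 hQ1 hrec k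
  rw [integral_mul_mpDensity_sq hs0 hs1.ne (Q k).continuous.continuousOn]
  have hintegrand : ∀ θ, (Q k).eval (1 + s ^ 2 + 2 * s * cos θ) * sin θ ^ 2 /
      (1 + s ^ 2 + 2 * s * cos θ) =
      sin ((k + 1) * θ) * sin θ / (1 + s ^ 2 + 2 * s * cos θ) := fun θ => by
    rw [hQ, ← eval_S_comp_mul_sin hs0.ne' (1 + s ^ 2) k θ]
    ring
  simp_rw [hintegrand]
  rw [← weightedSinIntegral, weightedSinIntegral_nat_add_one (by rwa [abs_of_pos hs0]) k,
    neg_pow]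
  field_simp
end

section
/- Let 0 < γ < ξ < 1, ρ = γ/ξ, λ_{h,r} = (√(1−γ) − √((1−ξ)ρ))² and Λ_{h,r} = (√(1−γ) + √((1−ξ)ρ))². Then (1−√ρ)² ≤ λ_{h,r} and Λ_{h,r} ≤ (1+√ρ)², i.e., the support [λ_{h,r}, Λ_{h,r}] of the rescaled SRHT limiting density is contained in the Marchenko–Pastur support [(1−√ρ)², (1+√ρ)²]. -/
/-! Put `a = √ρ` and `b = √(1 - ξ)`, both in `[0, 1]`. Then `√((1 - ξ)ρ) = ab` and
`1 - γ = 1 - a²(1 - b²)`, and both inclusions follow from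
`1 - a(1 - b) ≤ √(1 - a²(1 - b²)) ≤ 1`; the left inequality holds because the difference
of the squares is `2a(1 - a)(1 - b) ≥ 0`. -/

namespace SRHTEdges

variable {a b : ℝ}

lemma one_sub_mul_one_sub_le_sqrt (ha₀ : 0 ≤ a) (ha₁ : a ≤ 1) (hb₁ : b ≤ 1) :
    1 - a * (1 - b) ≤ √(1 - a ^ 2 * (1 - b ^ 2)) := by
  apply Real.le_sqrt_of_sq_le
  nlinarith [mul_nonneg (mul_nonneg ha₀ (sub_nonneg.2 ha₁)) (sub_nonneg.2 hb₁)]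

lemma sqrt_one_sub_le_one (hb₀ : 0 ≤ b) (hb₁ : b ≤ 1) :
    √(1 - a ^ 2 * (1 - b ^ 2)) ≤ 1 := by
  have hb_sq : b ^ 2 ≤ 1 := pow_le_one₀ hb₀ hb₁
  rw [Real.sqrt_le_one]
  nlinarith [mul_nonneg (sq_nonneg a) (sub_nonneg.2 hb_sq)]

theorem sq_edges_le (ha₀ : 0 ≤ a) (ha₁ : a ≤ 1) (hb₀ : 0 ≤ b) (hb₁ : b ≤ 1) :
    (1 - a) ^ 2 ≤ (√(1 - a ^ 2 * (1 - b ^ 2)) - a * b) ^ 2 ∧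
      (√(1 - a ^ 2 * (1 - b ^ 2)) + a * b) ^ 2 ≤ (1 + a) ^ 2 := by
  have hlow := one_sub_mul_one_sub_le_sqrt ha₀ ha₁ hb₁
  have hup := sqrt_one_sub_le_one (a := a) hb₀ hb₁
  constructor
  · exact pow_le_pow_left₀ (sub_nonneg.2 ha₁) (by linarith) 2
  · exact pow_le_pow_left₀ (by positivity) (by nlinarith) 2

end SRHTEdges

/-- for 0 < γ < ξ < 1 and ρ = γ/ξ, the support
[λ_{h,r}, Λ_{h,r}] = [(√(1−γ) − √((1−ξ)ρ))², (√(1−γ) + √((1−ξ)ρ))²] of the rescaled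
SRHT limiting density is contained in the Marchenko–Pastur support
[(1−√ρ)², (1+√ρ)²]. -/
theorem stmt_6 (γ ξ : ℝ) (hγ : 0 < γ) (hγξ : γ < ξ) (hξ : ξ < 1) :
    (1 - Real.sqrt (γ / ξ)) ^ 2 ≤
      (Real.sqrt (1 - γ) - Real.sqrt ((1 - ξ) * (γ / ξ))) ^ 2 ∧
    (Real.sqrt (1 - γ) + Real.sqrt ((1 - ξ) * (γ / ξ))) ^ 2 ≤
      (1 + Real.sqrt (γ / ξ)) ^ 2 := by
  have hξ₀ : 0 < ξ := hγ.trans hγξ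
  have hρ₀ : 0 ≤ γ / ξ := (div_pos hγ hξ₀).le
  have hρ₁ : γ / ξ ≤ 1 := (div_le_one hξ₀).2 hγξ.le
  have hmul : √((1 - ξ) * (γ / ξ)) = √(γ / ξ) * √(1 - ξ) := by
    rw [Real.sqrt_mul (by linarith), mul_comm]
  have hγ_eq : 1 - γ = 1 - √(γ / ξ) ^ 2 * (1 - √(1 - ξ) ^ 2) := by
    rw [Real.sq_sqrt hρ₀, Real.sq_sqrt (by linarith)]
    field_simp
    ring
  rw [hmul, hγ_eq]
  exact SRHTEdges.sq_edges_le (Real.sqrt_nonneg _) (Real.sqrt_le_one.2 hρ₁)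
    (Real.sqrt_nonneg _) (Real.sqrt_le_one.2 (by linarith))
end

section
/- For 0 < γ < ξ < 1 and ρ = γ/ξ, the inequality ρ·(1−ξ)/(1−γ) < ρ·ξ(1−ξ)/(γ² + ξ − 2γξ) holds; equivalently, (1−ξ)/(1−γ) < ξ(1−ξ)/(γ² + ξ − 2ξγ). -/
/-! The denominator splits as `γ² + ξ − 2γξ = ξ(1−ξ) + (ξ−γ)²`, so it is positive, and it falls
short of `ξ(1−γ)` by exactly `γ(ξ−γ) > 0`. Writing `(1−ξ)/(1−γ) = ξ(1−ξ)/(ξ(1−γ))`, the inequality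
is a comparison of two fractions with the same positive numerator. -/

lemma sq_add_sub_two_mul_mul_eq (γ ξ : ℝ) :
    γ ^ 2 + ξ - 2 * γ * ξ = ξ * (1 - ξ) + (ξ - γ) ^ 2 := by
  ring

lemma sq_add_sub_two_mul_mul_pos {ξ : ℝ} (γ : ℝ) (hξ₀ : 0 < ξ) (hξ₁ : ξ < 1) :
    0 < γ ^ 2 + ξ - 2 * γ * ξ := by
  have : 0 < ξ * (1 - ξ) := mul_pos hξ₀ (sub_pos.2 hξ₁)
  rw [sq_add_sub_two_mul_mul_eq]
  positivity

lemma sq_add_sub_two_mul_mul_lt {γ ξ : ℝ} (hγ : 0 < γ) (hγξ : γ < ξ) :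
    γ ^ 2 + ξ - 2 * γ * ξ < ξ * (1 - γ) := by
  have gap : ξ * (1 - γ) - (γ ^ 2 + ξ - 2 * γ * ξ) = γ * (ξ - γ) := by ring
  linarith [mul_pos hγ (sub_pos.2 hγξ)]

lemma div_lt_mul_div_sq_add_sub_two_mul_mul {γ ξ : ℝ} (hγ : 0 < γ) (hγξ : γ < ξ) (hξ : ξ < 1) :
    (1 - ξ) / (1 - γ) < ξ * (1 - ξ) / (γ ^ 2 + ξ - 2 * γ * ξ) := by
  have hξ₀ : 0 < ξ := hγ.trans hγξ
  rw [← mul_div_mul_left (1 - ξ) (1 - γ) hξ₀.ne']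
  exact div_lt_div_of_pos_left (mul_pos hξ₀ (sub_pos.2 hξ))
    (sq_add_sub_two_mul_mul_pos γ hξ₀ hξ) (sq_add_sub_two_mul_mul_lt hγ hγξ)

/-- for 0 < γ < ξ < 1 and ρ = γ/ξ, one has γ² + ξ − 2γξ > 0 and
ρ(1−ξ)/(1−γ) < ρ·ξ(1−ξ)/(γ² + ξ − 2γξ); equivalently
(1−ξ)/(1−γ) < ξ(1−ξ)/(γ² + ξ − 2ξγ). -/
theorem stmt_8 (γ ξ : ℝ) (hγ : 0 < γ) (hγξ : γ < ξ) (hξ : ξ < 1) :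
    0 < γ ^ 2 + ξ - 2 * γ * ξ ∧
    (γ / ξ) * (1 - ξ) / (1 - γ) <
      (γ / ξ) * (ξ * (1 - ξ)) / (γ ^ 2 + ξ - 2 * γ * ξ) ∧
    (1 - ξ) / (1 - γ) < ξ * (1 - ξ) / (γ ^ 2 + ξ - 2 * ξ * γ) := by
  have hξ₀ : 0 < ξ := hγ.trans hγξ
  have key := div_lt_mul_div_sq_add_sub_two_mul_mul hγ hγξ hξ
  refine ⟨sq_add_sub_two_mul_mul_pos γ hξ₀ hξ, ?_, ?_⟩
  · rw [mul_div_assoc, mul_div_assoc]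
    exact mul_lt_mul_of_pos_left key (div_pos hγ hξ₀)
  · rwa [mul_right_comm 2 ξ γ]
end
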